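/- arXiv:1706.05916 — 4 statements merged into one kernel-verified Lean document; each statement's English description precedes it below -/
import Mathlib

section
/- Let M ∈ ℝ^{m×n} be a matrix whose columns M_1,…,M_n are indexed by the points of a finite metric space (X,d) in which every pair of points is joined by a path through neighbouring points and neighbouring points are at distance 1. If f_0, f_0' ∈ [0,1]^n are source vectors with ‖f_0‖₁ = ‖f_0'‖₁ = 1 that are α-neighbours, i.e. EMD(f_0, f_0') ≤ α, then ‖M f_0 − M f_0'‖₂ ≤ α · max_{(i,j) neighbouring} ‖M_i − M_j‖₂. -/
open scoped BigOperators

/-- The Euclidean (`ℓ₂`) norm of a vector in `ℝ^m`. -/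
noncomputable def l2norm {m : ℕ} (x : Fin m → ℝ) : ℝ := Real.sqrt (∑ i, (x i) ^ 2)

/-- The `ℓ₁` norm of a vector in `ℝ^n`. -/
noncomputable def l1norm {n : ℕ} (x : Fin n → ℝ) : ℝ := ∑ i, |x i|

/-- The Earth Mover Distance between two mass distributions `p q` on a finite
space with distance function `d`, defined as the infimum of the cost of a flow. -/
noncomputable def EMD {n : ℕ} (d : Fin n → Fin n → ℝ) (p q : Fin n → ℝ) : ℝ :=
  sInf {c : ℝ | ∃ F : Fin n → Fin n → ℝ,
    (∀ i j, 0 ≤ F i j) ∧ (∀ i, ∑ j, F i j ≤ p i) ∧ (∀ j, ∑ i, F i j ≤ q j) ∧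
    (∑ i, ∑ j, F i j = 1) ∧ c = ∑ i, ∑ j, F i j * d i j}

lemma l2norm_eq {m : ℕ} (x : Fin m → ℝ) :
    l2norm x = ‖(EuclideanSpace.equiv (Fin m) ℝ).symm x‖ := by
  simp [l2norm, EuclideanSpace.norm_eq, sq_abs]

lemma sum_eq_of_le {n : ℕ} (g h : Fin n → ℝ) (hle : ∀ i, g i ≤ h i)
    (hsum : ∑ i, g i = ∑ i, h i) : ∀ i, g i = h i := by
  intro i
  have := (Finset.sum_eq_sum_iff_of_le (fun i _ => hle i)).mp hsum
  exact this i (Finset.mem_univ i)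

/-- If `f₀, f₀'` are unit-mass source vectors in `[0,1]^n` that are
`α`-neighbours (`EMD(f₀, f₀') ≤ α`), where the column indices carry a metric `d`
induced as the shortest-path metric of a neighbour relation `N` with neighbours at
distance `1`, then `‖M f₀ − M f₀'‖₂ ≤ α ⬝ max_{(i,j) neighbours} ‖M_i − M_j‖₂`. -/
theorem emd_neighbour_sensitivity {m n : ℕ} (M : Matrix (Fin m) (Fin n) ℝ)
    (d : Fin n → Fin n → ℝ) (N : Fin n → Fin n → Prop)
    (hd_self : ∀ i, d i i = 0)
    (hd_symm : ∀ i j, d i j = d j i)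
    (hd_tri : ∀ i j k, d i k ≤ d i j + d j k)
    (hd_pos : ∀ i j, i ≠ j → 0 < d i j)
    (hN_dist : ∀ i j, N i j → d i j = 1)
    (hpath : ∀ i j : Fin n, ∃ (L : ℕ) (c : ℕ → Fin n), c 0 = i ∧ c L = j ∧
      (∀ t, t < L → N (c t) (c (t + 1))) ∧ (L : ℝ) = d i j)
    (α : ℝ) (hα : 0 < α)
    (f₀ f₀' : Fin n → ℝ)
    (hf₀ : ∀ i, f₀ i ∈ Set.Icc (0 : ℝ) 1) (hf₀' : ∀ i, f₀' i ∈ Set.Icc (0 : ℝ) 1)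
    (hmass : l1norm f₀ = 1) (hmass' : l1norm f₀' = 1)
    (hneigh : EMD d f₀ f₀' ≤ α) :
    l2norm (fun i => M.mulVec f₀ i - M.mulVec f₀' i) ≤
      α * sSup {r : ℝ | ∃ i j, N i j ∧ r = l2norm (fun k => M k i - M k j)} := by
  classical
  set Sset := {r : ℝ | ∃ i j, N i j ∧ r = l2norm (fun k => M k i - M k j)} with hSset
  set S := sSup Sset with hSdef
  have hS0 : 0 ≤ S :=
    Real.sSup_nonneg (by rintro r ⟨i, j, _, rfl⟩; exact Real.sqrt_nonneg _)
  have hbdd : BddAbove Sset := by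
    have hsub : Sset ⊆
        Set.range (fun p : Fin n × Fin n => l2norm (fun k => M k p.1 - M k p.2)) := by
      rintro r ⟨i, j, _, rfl⟩; exact ⟨(i, j), rfl⟩
    exact ((Set.finite_range _).subset hsub).bddAbove
  have hstep : ∀ i j, N i j → l2norm (fun k => M k i - M k j) ≤ S :=
    fun i j h => le_csSup hbdd ⟨i, j, h, rfl⟩
  -- distance bound on column differences
  have hD : ∀ i j, l2norm (fun k => M k i - M k j) ≤ d i j * S := by
    intro i j
    obtain ⟨L, c, hc0, hcL, hcN, hLd⟩ := hpath i j
    have key : ∀ t, t ≤ L → l2norm (fun k => M k (c 0) - M k (c t)) ≤ (t : ℝ) * S := by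
      intro t
      induction t with
      | zero => intro _; simp [l2norm]
      | succ t ih =>
        intro ht
        have h1 := ih (Nat.le_of_succ_le ht)
        have h2 := hstep (c t) (c (t + 1)) (hcN t (Nat.lt_of_succ_le ht))
        have htri : l2norm (fun k => M k (c 0) - M k (c (t + 1))) ≤
            l2norm (fun k => M k (c 0) - M k (c t)) +
            l2norm (fun k => M k (c t) - M k (c (t + 1))) := by
          have hxyz : (fun k => M k (c 0) - M k (c (t + 1))) =
              (fun k => M k (c 0) - M k (c t)) + (fun k => M k (c t) - M k (c (t + 1))) := by
            funext k; simp [Pi.add_apply]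
          rw [l2norm_eq, l2norm_eq, l2norm_eq, hxyz, map_add]
          exact norm_add_le _ _
        calc l2norm (fun k => M k (c 0) - M k (c (t + 1)))
            ≤ l2norm (fun k => M k (c 0) - M k (c t)) +
              l2norm (fun k => M k (c t) - M k (c (t + 1))) := htri
          _ ≤ (t : ℝ) * S + S := add_le_add h1 h2
          _ = ((t + 1 : ℕ) : ℝ) * S := by push_cast; ring
    have := key L le_rfl
    rw [hc0, hcL, hLd] at this
    exact this
  have hsum₀ : ∑ i, f₀ i = 1 := by
    have habs : ∀ i, |f₀ i| = f₀ i := fun i => abs_of_nonneg (hf₀ i).1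
    simpa [l1norm, habs] using hmass
  have hsum₀' : ∑ i, f₀' i = 1 := by
    have habs : ∀ i, |f₀' i| = f₀' i := fun i => abs_of_nonneg (hf₀' i).1
    simpa [l1norm, habs] using hmass'
  -- core bound for any feasible flow
  have core : ∀ F : Fin n → Fin n → ℝ, (∀ i j, 0 ≤ F i j) →
      (∀ i, ∑ j, F i j ≤ f₀ i) → (∀ j, ∑ i, F i j ≤ f₀' j) →
      (∑ i, ∑ j, F i j = 1) →
      l2norm (fun i => M.mulVec f₀ i - M.mulVec f₀' i) ≤
        (∑ i, ∑ j, F i j * d i j) * S := by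
    intro F hF0 hFr hFc hFt
    have hrow : ∀ i, ∑ j, F i j = f₀ i :=
      sum_eq_of_le _ _ hFr (by rw [hFt, hsum₀])
    have hcol : ∀ j, ∑ i, F i j = f₀' j :=
      sum_eq_of_le _ _ hFc (by rw [Finset.sum_comm, hFt, hsum₀'])
    have hid : (fun k => M.mulVec f₀ k - M.mulVec f₀' k) =
        ∑ i, ∑ j, F i j • ((fun k => M k i) - fun k => M k j) := by
      funext k
      have lhs1 : ∑ i, M k i * f₀ i = ∑ i, ∑ j, F i j * M k i := by
        refine Finset.sum_congr rfl fun i _ => ?_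
        rw [← Finset.sum_mul, hrow i, mul_comm]
      have lhs2 : ∑ j, M k j * f₀' j = ∑ i, ∑ j, F i j * M k j := by
        rw [Finset.sum_comm]
        refine Finset.sum_congr rfl fun j _ => ?_
        rw [← Finset.sum_mul, hcol j, mul_comm]
      simp only [Matrix.mulVec, dotProduct, Finset.sum_apply, Pi.smul_apply,
        Pi.sub_apply, smul_eq_mul]
      rw [show (∑ i, M k i * f₀ i) - (∑ j, M k j * f₀' j)
          = (∑ i, ∑ j, F i j * M k i) - (∑ i, ∑ j, F i j * M k j) by rw [lhs1, lhs2]]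
      rw [← Finset.sum_sub_distrib]
      refine Finset.sum_congr rfl fun i _ => ?_
      rw [← Finset.sum_sub_distrib]
      exact Finset.sum_congr rfl fun j _ => by ring
    calc l2norm (fun i => M.mulVec f₀ i - M.mulVec f₀' i)
        = ‖(EuclideanSpace.equiv (Fin m) ℝ).symm
            (∑ i, ∑ j, F i j • ((fun k => M k i) - fun k => M k j))‖ := by
          rw [l2norm_eq, hid]
      _ = ‖∑ i, ∑ j, F i j • ((EuclideanSpace.equiv (Fin m) ℝ).symm
            ((fun k => M k i) - fun k => M k j))‖ := by
          simp only [map_sum, map_smul]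
      _ ≤ ∑ i, ∑ j, ‖F i j • ((EuclideanSpace.equiv (Fin m) ℝ).symm
            ((fun k => M k i) - fun k => M k j))‖ :=
          (norm_sum_le _ _).trans (Finset.sum_le_sum fun i _ => norm_sum_le _ _)
      _ = ∑ i, ∑ j, F i j * l2norm (fun k => M k i - M k j) := by
          refine Finset.sum_congr rfl fun i _ => Finset.sum_congr rfl fun j _ => ?_
          rw [norm_smul, Real.norm_eq_abs, abs_of_nonneg (hF0 i j), l2norm_eq]
          rfl
      _ ≤ ∑ i, ∑ j, F i j * (d i j * S) :=
          Finset.sum_le_sum fun i _ => Finset.sum_le_sum fun j _ =>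
            mul_le_mul_of_nonneg_left (hD i j) (hF0 i j)
      _ = (∑ i, ∑ j, F i j * d i j) * S := by
          simp [Finset.sum_mul, mul_assoc]
  -- the product flow shows the EMD feasible set is nonempty
  have hF0feas : (∀ i j, (0:ℝ) ≤ f₀ i * f₀' j) ∧ (∀ i, ∑ j, f₀ i * f₀' j ≤ f₀ i) ∧
      (∀ j, ∑ i, f₀ i * f₀' j ≤ f₀' j) ∧ (∑ i, ∑ j, f₀ i * f₀' j = 1) := by
    refine ⟨fun i j => mul_nonneg (hf₀ i).1 (hf₀' j).1, fun i => ?_, fun j => ?_, ?_⟩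
    · rw [← Finset.mul_sum, hsum₀', mul_one]
    · rw [← Finset.sum_mul, hsum₀, one_mul]
    · simp [← Finset.mul_sum, hsum₀', hsum₀]
  set c0 : ℝ := ∑ i, ∑ j, (f₀ i * f₀' j) * d i j with hc0
  have hc0mem : c0 ∈ {c : ℝ | ∃ F : Fin n → Fin n → ℝ,
      (∀ i j, 0 ≤ F i j) ∧ (∀ i, ∑ j, F i j ≤ f₀ i) ∧ (∀ j, ∑ i, F i j ≤ f₀' j) ∧
      (∑ i, ∑ j, F i j = 1) ∧ c = ∑ i, ∑ j, F i j * d i j} :=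
    ⟨fun i j => f₀ i * f₀' j, hF0feas.1, hF0feas.2.1, hF0feas.2.2.1, hF0feas.2.2.2, rfl⟩
  rcases hS0.lt_or_eq with hSpos | hSzero
  · -- S > 0
    have hLB : l2norm (fun i => M.mulVec f₀ i - M.mulVec f₀' i) / S ≤ EMD d f₀ f₀' := by
      refine le_csInf ⟨c0, hc0mem⟩ ?_
      rintro c ⟨F, h1, h2, h3, h4, rfl⟩
      rw [div_le_iff₀ hSpos]
      exact core F h1 h2 h3 h4
    have := (div_le_iff₀ hSpos).mp (hLB.trans hneigh)
    exact this
  · -- S = 0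
    have hb := core _ hF0feas.1 hF0feas.2.1 hF0feas.2.2.1 hF0feas.2.2.2
    rw [← hSzero] at hb ⊢
    simpa using hb
end

section
/- Fix T > 0 and integers n, m ≥ 1, and let A ∈ ℝ^{m×n} be the heat measurement matrix A_{ij} = g(j/n − i/m) where g(x) = (1/√(4πT)) e^{−x²/(4T)}. Then for every i ∈ {1,…,n−1}, the consecutive columns of A satisfy ‖A_i − A_{i+1}‖₂ ≤ √(m/(4πT)) · max{1 − e^{−3/(4nT)}, e^{1/(2nT)} − 1}; in particular there is a universal constant c > 0 such that whenever nT ≥ 1, ‖A_i − A_{i+1}‖₂ ≤ c √m /(n T^{3/2}). -/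
open scoped BigOperators
open Real

/-- The one-dimensional heat kernel `g(x) = (1/√(4πT)) e^(−x²/(4T))` at diffusion time `T`. -/
noncomputable def heatKernel (T x : ℝ) : ℝ :=
  (1 / Real.sqrt (4 * Real.pi * T)) * Real.exp (-x ^ 2 / (4 * T))

/-- The heat measurement matrix `A ∈ ℝ^{m×n}` with `A_{ij} = g(j/n − i/m)`:
sources on the grid `{1/n, …, 1}`, sensors at `{1/m, …, 1}`. -/
noncomputable def heatMatrix (T : ℝ) (m n : ℕ) : Matrix (Fin m) (Fin n) ℝ :=
  Matrix.of fun i j => heatKernel T (((j : ℝ) + 1) / n - ((i : ℝ) + 1) / m)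

/-! Every sensor sees two neighbouring sources at points `x` and `x + 1/n` with `|x| ≤ 1`, so the
squared distances differ by at most `3/n`. As `|e^{−u} − e^{−v}| ≤ 1 − e^{−|u−v|}` for `u, v ≥ 0`,
each entry of `A_j − A_{j+1}` is at most `(1 − e^{−3/(4nT)}) / √(4πT)`, and summing `m` squares
gives the first bound. The second follows from `1 − e^{−s} ≤ s` and `√(4πT) ≥ 2√T`, with
`c = 3/8`. -/

lemma l2norm_le_sqrt_card_mul {m : ℕ} {f : Fin m → ℝ} {C : ℝ} (hC : 0 ≤ C)
    (h : ∀ i, |f i| ≤ C) : l2norm f ≤ √m * C := by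
  have hsum : ∑ i, f i ^ 2 ≤ m * C ^ 2 := by
    calc ∑ i, f i ^ 2 ≤ ∑ _i : Fin m, C ^ 2 :=
          Finset.sum_le_sum fun i _ => sq_le_sq' (abs_le.mp (h i)).1 (abs_le.mp (h i)).2
      _ = m * C ^ 2 := by simp
  calc l2norm f ≤ √(m * C ^ 2) := Real.sqrt_le_sqrt hsum
    _ = √m * C := by rw [Real.sqrt_mul (Nat.cast_nonneg m), Real.sqrt_sq hC]

lemma exp_neg_div_le_one {a b : ℝ} (ha : 0 ≤ a) (hb : 0 ≤ b) : exp (-a / b) ≤ 1 :=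
  exp_le_one_iff.mpr (by rw [neg_div]; exact neg_nonpos.mpr (div_nonneg ha hb))

lemma exp_neg_sub_exp_neg_le {u v : ℝ} (hu : 0 ≤ u) (huv : u ≤ v) :
    exp (-u) - exp (-v) ≤ 1 - exp (-(v - u)) := by
  have hsplit : exp (-v) = exp (-u) * exp (-(v - u)) := by rw [← exp_add]; ring_nf
  have hu1 : exp (-u) ≤ 1 := exp_le_one_iff.mpr (by linarith)
  have hvu1 : exp (-(v - u)) ≤ 1 := exp_le_one_iff.mpr (by linarith)
  calc exp (-u) - exp (-v) = exp (-u) * (1 - exp (-(v - u))) := by rw [hsplit]; ring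
    _ ≤ 1 - exp (-(v - u)) := mul_le_of_le_one_left (by linarith) hu1

lemma abs_exp_neg_sub_exp_neg_le {u v : ℝ} (hu : 0 ≤ u) (hv : 0 ≤ v) :
    |exp (-u) - exp (-v)| ≤ 1 - exp (-|u - v|) := by
  rcases le_total u v with huv | hvu
  · have hexp : exp (-v) ≤ exp (-u) := exp_le_exp.mpr (by linarith)
    rw [abs_of_nonneg (by linarith), abs_sub_comm, abs_of_nonneg (by linarith)]
    exact exp_neg_sub_exp_neg_le hu huv
  · have hexp : exp (-u) ≤ exp (-v) := exp_le_exp.mpr (by linarith)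
    rw [abs_of_nonpos (by linarith), abs_of_nonneg (by linarith), neg_sub]
    exact exp_neg_sub_exp_neg_le hv hvu

lemma abs_heatKernel_sub_le {T : ℝ} (hT : 0 < T) {x y d : ℝ} (hd : |x ^ 2 - y ^ 2| ≤ d) :
    |heatKernel T x - heatKernel T y| ≤ (1 - exp (-(d / (4 * T)))) / √(4 * π * T) := by
  have hdiff : heatKernel T x - heatKernel T y =
      (exp (-(x ^ 2 / (4 * T))) - exp (-(y ^ 2 / (4 * T)))) / √(4 * π * T) := by
    simp only [heatKernel, neg_div]
    ring
  have hexponent : |x ^ 2 / (4 * T) - y ^ 2 / (4 * T)| ≤ d / (4 * T) := by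
    rw [← sub_div, abs_div, abs_of_pos (show (0 : ℝ) < 4 * T by positivity)]
    exact div_le_div_of_nonneg_right hd (by positivity)
  rw [hdiff, abs_div, abs_of_nonneg (Real.sqrt_nonneg _)]
  refine div_le_div_of_nonneg_right ?_ (Real.sqrt_nonneg _)
  calc _ ≤ 1 - exp (-|x ^ 2 / (4 * T) - y ^ 2 / (4 * T)|) :=
        abs_exp_neg_sub_exp_neg_le (by positivity) (by positivity)
    _ ≤ 1 - exp (-(d / (4 * T))) := by gcongr

lemma abs_sq_sub_add_sq_le {x h : ℝ} (hx : |x| ≤ 1) (h0 : 0 ≤ h) (h1 : h ≤ 1) :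
    |x ^ 2 - (x + h) ^ 2| ≤ 3 * h := by
  obtain ⟨hx₁, hx₂⟩ := abs_le.mp hx
  rw [abs_le]
  constructor <;> nlinarith

lemma grid_mem_Icc {N : ℕ} (k : ℕ) (hk : k < N) : ((k : ℝ) + 1) / N ∈ Set.Icc (0 : ℝ) 1 := by
  have hkN : (k : ℝ) + 1 ≤ N := by exact_mod_cast hk
  exact ⟨by positivity, div_le_one_of_le₀ hkN (Nat.cast_nonneg N)⟩

lemma abs_heatMatrix_sub_next_column_le {T : ℝ} (hT : 0 < T) {m n : ℕ} (i : Fin m) (j : Fin n)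
    (h : j.val + 1 < n) :
    |heatMatrix T m n i j - heatMatrix T m n i ⟨j.val + 1, h⟩| ≤
      (1 - exp (-3 / (4 * n * T))) / √(4 * π * T) := by
  set x : ℝ := ((j : ℝ) + 1) / n - ((i : ℝ) + 1) / m
  have hn : (1 : ℝ) ≤ n := Nat.one_le_cast.mpr j.pos
  have hentry : heatMatrix T m n i j - heatMatrix T m n i ⟨j.val + 1, h⟩ =
      heatKernel T x - heatKernel T (x + 1 / n) := by
    simp only [heatMatrix, Matrix.of_apply, x]
    congr 2
    push_cast
    ring
  have hsource := grid_mem_Icc j.val h.le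
  have hsensor := grid_mem_Icc i.val i.isLt
  have hx : |x| ≤ 1 := abs_sub_le_of_nonneg_of_le hsource.1 hsource.2 hsensor.1 hsensor.2
  have hstep : 1 / (n : ℝ) ≤ 1 := div_le_one_of_le₀ hn (by linarith)
  have hexponent : -(3 * (1 / (n : ℝ)) / (4 * T)) = -3 / (4 * n * T) := by
    field_simp
  rw [hentry, ← hexponent]
  exact abs_heatKernel_sub_le hT (abs_sq_sub_add_sq_le hx (by positivity) hstep)

lemma l2norm_heatMatrix_sub_next_column_le {T : ℝ} (hT : 0 < T) {m n : ℕ} (j : Fin n)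
    (h : j.val + 1 < n) :
    l2norm (fun i => heatMatrix T m n i j - heatMatrix T m n i ⟨j.val + 1, h⟩) ≤
      √(m / (4 * π * T)) * (1 - exp (-3 / (4 * n * T))) := by
  have hgap : 0 ≤ 1 - exp (-3 / (4 * n * T)) :=
    sub_nonneg.mpr (exp_neg_div_le_one (by norm_num) (by positivity))
  calc _ ≤ √m * ((1 - exp (-3 / (4 * n * T))) / √(4 * π * T)) :=
        l2norm_le_sqrt_card_mul (by positivity)
          fun i => abs_heatMatrix_sub_next_column_le hT i j h
    _ = √(m / (4 * π * T)) * (1 - exp (-3 / (4 * n * T))) := by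
        rw [Real.sqrt_div (Nat.cast_nonneg m)]
        ring

lemma sqrt_div_four_pi_mul_le {T : ℝ} (hT : 0 < T) (a : ℝ) (ha : 0 ≤ a) :
    √(a / (4 * π * T)) ≤ √a / (2 * √T) := by
  have h4T : √(4 * T) = 2 * √T := by
    rw [Real.sqrt_mul (by norm_num), show (4 : ℝ) = 2 ^ 2 by norm_num,
      Real.sqrt_sq (by norm_num)]
  rw [Real.sqrt_div ha, ← h4T]
  gcongr
  nlinarith [pi_gt_three]

lemma sqrt_div_four_pi_mul_one_sub_exp_le {T : ℝ} (hT : 0 < T) (n m : ℕ) :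
    √(m / (4 * π * T)) * (1 - exp (-3 / (4 * n * T))) ≤
      3 / 8 * √m / (n * T ^ ((3 : ℝ) / 2)) := by
  have hgap : 1 - exp (-3 / (4 * n * T)) ≤ 3 / (4 * n * T) := by
    rw [neg_div]
    linarith [one_sub_le_exp_neg (3 / (4 * n * T))]
  have hpow : T ^ ((3 : ℝ) / 2) = T * √T := by
    rw [show (3 : ℝ) / 2 = 1 + 1 / 2 by norm_num, rpow_add hT, rpow_one, ← sqrt_eq_rpow]
  calc _ ≤ √m / (2 * √T) * (3 / (4 * n * T)) :=
        mul_le_mul (sqrt_div_four_pi_mul_le hT m (Nat.cast_nonneg m)) hgap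
          (sub_nonneg.mpr (exp_neg_div_le_one (by norm_num) (by positivity))) (by positivity)
    _ = 3 / 8 * √m / (n * T ^ ((3 : ℝ) / 2)) := by
        rw [hpow]
        field_simp
        ring

/-- Consecutive columns of the heat measurement matrix satisfy
`‖A_j − A_{j+1}‖₂ ≤ √(m/(4πT)) · max{1 − e^(−3/(4nT)), e^(1/(2nT)) − 1}`; in
particular there is a universal constant `c > 0` such that, whenever `nT ≥ 1`,
`‖A_j − A_{j+1}‖₂ ≤ c √m / (n T^{3/2})`. -/
theorem heatMatrix_consecutive_columns_close :
    (∀ (T : ℝ) (m n : ℕ), 0 < T → 1 ≤ m → 1 ≤ n →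
      ∀ (j : Fin n) (h : j.val + 1 < n),
        l2norm (fun i => heatMatrix T m n i j - heatMatrix T m n i ⟨j.val + 1, h⟩) ≤
          Real.sqrt (m / (4 * Real.pi * T)) *
            max (1 - Real.exp (-3 / (4 * n * T))) (Real.exp (1 / (2 * n * T)) - 1)) ∧
    ∃ c : ℝ, 0 < c ∧ ∀ (T : ℝ) (m n : ℕ), 0 < T → 1 ≤ m → 1 ≤ n → 1 ≤ (n : ℝ) * T →
      ∀ (j : Fin n) (h : j.val + 1 < n),
        l2norm (fun i => heatMatrix T m n i j - heatMatrix T m n i ⟨j.val + 1, h⟩) ≤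
          c * Real.sqrt m / (n * T ^ ((3 : ℝ) / 2)) := by
  refine ⟨fun T m n hT _ _ j h => ?_, 3 / 8, by norm_num, fun T m n hT _ _ _ j h => ?_⟩
  · exact (l2norm_heatMatrix_sub_next_column_le hT j h).trans
      (mul_le_mul_of_nonneg_left (le_max_left _ _) (Real.sqrt_nonneg _))
  · exact (l2norm_heatMatrix_sub_next_column_le hT j h).trans
      (sqrt_div_four_pi_mul_one_sub_exp_le hT n m)
end

section
/- Fix T > 0 with nT ≥ 1 and let A ∈ ℝ^{m×n} be the heat measurement matrix A_{ij} = g(j/n − i/m) with g(x) = (1/√(4πT)) e^{−x²/(4T)}. There is a universal constant c > 0 such that for all nonnegative source vectors f_0, f_0' ∈ [0,1]^n with ‖f_0‖₁ = ‖f_0'‖₁ = 1, ‖A f_0 − A f_0'‖₂ ≤ c (√m / T^{3/2}) · EMD(f_0, f_0'), where EMD is taken with respect to the Euclidean metric on the grid {1/n, …, 1}. -/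
open scoped BigOperators

/-- The metric on the grid `{1/n, …, 1}`, indexed by `Fin n`: `d(i/n, j/n) = |i−j|/n`. -/
noncomputable def gridDist (n : ℕ) (i j : Fin n) : ℝ := |(i : ℝ) - (j : ℝ)| / n

lemma heatKernel_deriv (T : ℝ) (x : ℝ) :
    HasDerivAt (heatKernel T)
      ((1 / Real.sqrt (4 * Real.pi * T)) *
        (Real.exp (-x ^ 2 / (4 * T)) * (-(2 * x ^ 1) / (4 * T)))) x := by
  have h1 : HasDerivAt (fun x : ℝ => -x ^ 2 / (4 * T)) (-(2 * x ^ 1) / (4 * T)) x :=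
    ((hasDerivAt_pow 2 x).neg).div_const (4 * T)
  exact (h1.exp).const_mul _

lemma heatKernel_lip (T : ℝ) (hT : 0 < T) {x y : ℝ} (hx : x ∈ Set.Icc (-1:ℝ) 1)
    (hy : y ∈ Set.Icc (-1:ℝ) 1) :
    |heatKernel T x - heatKernel T y| ≤
      (1 / Real.sqrt (4 * Real.pi * T)) * (1 / (2 * T)) * |x - y| := by
  have hC : (0:ℝ) ≤ 1 / Real.sqrt (4 * Real.pi * T) := by positivity
  have := Convex.norm_image_sub_le_of_norm_hasDerivWithin_le
    (f := heatKernel T)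
    (f' := fun x => (1 / Real.sqrt (4 * Real.pi * T)) *
      (Real.exp (-x ^ 2 / (4 * T)) * (-(2 * x ^ 1) / (4 * T))))
    (s := Set.Icc (-1:ℝ) 1)
    (C := (1 / Real.sqrt (4 * Real.pi * T)) * (1 / (2 * T)))
    (fun z _ => (heatKernel_deriv T z).hasDerivWithinAt)
    (fun z hz => ?_) (convex_Icc _ _) hy hx
  · simpa [Real.norm_eq_abs] using this
  · rw [Real.norm_eq_abs, abs_mul, abs_of_nonneg hC]
    apply mul_le_mul_of_nonneg_left _ hC
    rw [abs_mul]
    have h1 : |Real.exp (-z ^ 2 / (4 * T))| ≤ 1 := by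
      rw [abs_of_pos (Real.exp_pos _)]
      apply Real.exp_le_one_iff.mpr
      have : (0:ℝ) ≤ z ^ 2 := sq_nonneg z
      have h4T : (0:ℝ) < 4 * T := by linarith
      apply div_nonpos_of_nonpos_of_nonneg <;> linarith
    have h2 : |(-(2 * z ^ 1) / (4 * T))| ≤ 1 / (2 * T) := by
      rw [abs_div, abs_neg, abs_of_pos (by linarith : (0:ℝ) < 4 * T)]
      rw [div_le_div_iff₀ (by linarith) (by linarith)]
      have hz1 : |z| ≤ 1 := abs_le.mpr ⟨hz.1, hz.2⟩
      calc |2 * z ^ 1| * (2 * T) = 4 * T * |z| := by rw [abs_mul]; simp [abs_of_nonneg]; ring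
        _ ≤ 4 * T * 1 := by nlinarith [abs_nonneg z]
        _ = 1 * (4 * T) := by ring
    calc |Real.exp (-z ^ 2 / (4 * T))| * |(-(2 * z ^ 1) / (4 * T))|
        ≤ 1 * (1 / (2 * T)) := mul_le_mul h1 h2 (abs_nonneg _) one_pos.le
      _ = 1 / (2 * T) := one_mul _

/-- There is a universal constant `c > 0` such that whenever `nT ≥ 1`,
for all unit-mass source vectors `f₀, f₀' ∈ [0,1]^n`,
`‖A f₀ − A f₀'‖₂ ≤ c (√m / T^{3/2}) · EMD(f₀, f₀')`. -/
theorem heatMatrix_lipschitz_emd :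
    ∃ c : ℝ, 0 < c ∧ ∀ (T : ℝ) (m n : ℕ), 0 < T → 1 ≤ m → 1 ≤ n → 1 ≤ (n : ℝ) * T →
      ∀ f₀ f₀' : Fin n → ℝ,
        (∀ i, f₀ i ∈ Set.Icc (0 : ℝ) 1) → (∀ i, f₀' i ∈ Set.Icc (0 : ℝ) 1) →
        l1norm f₀ = 1 → l1norm f₀' = 1 →
        l2norm (fun i => (heatMatrix T m n).mulVec f₀ i - (heatMatrix T m n).mulVec f₀' i) ≤
          c * (Real.sqrt m / T ^ ((3 : ℝ) / 2)) * EMD (gridDist n) f₀ f₀' := by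
  refine ⟨1 / (4 * Real.sqrt Real.pi), by positivity, ?_⟩
  intro T m n hT hm hn _ f₀ f₀' hf₀ hf₀' h1 h1'
  have hπ := Real.pi_pos
  have hn0 : (0:ℝ) < n := by exact_mod_cast hn
  have hm0 : (0:ℝ) < m := by exact_mod_cast hm
  set L : ℝ := (1 / Real.sqrt (4 * Real.pi * T)) * (1 / (2 * T)) with hL
  have hLpos : 0 < L := by rw [hL]; positivity
  -- sums of f equal 1
  have hsum₀ : ∑ i, f₀ i = 1 := by
    rw [← h1]; unfold l1norm
    exact Finset.sum_congr rfl fun i _ => (abs_of_nonneg (hf₀ i).1).symm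
  have hsum₀' : ∑ i, f₀' i = 1 := by
    rw [← h1']; unfold l1norm
    exact Finset.sum_congr rfl fun i _ => (abs_of_nonneg (hf₀' i).1).symm
  -- arguments lie in [-1,1]
  have harg : ∀ (i : Fin m) (j : Fin n),
      ((j : ℝ) + 1) / n - ((i : ℝ) + 1) / m ∈ Set.Icc (-1:ℝ) 1 := by
    intro i j
    have hj1 : (0:ℝ) < (j : ℝ) + 1 := by positivity
    have hj2 : ((j : ℝ) + 1) ≤ n := by
      have := j.isLt; exact_mod_cast Nat.succ_le_of_lt this
    have hi1 : (0:ℝ) < (i : ℝ) + 1 := by positivity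
    have hi2 : ((i : ℝ) + 1) ≤ m := by
      have := i.isLt; exact_mod_cast Nat.succ_le_of_lt this
    constructor
    · have h1 : (0:ℝ) < ((j : ℝ) + 1) / n := by positivity
      have h2 : ((i : ℝ) + 1) / m ≤ 1 := by
        rw [div_le_one hm0]; exact hi2
      linarith
    · have h1 : ((j : ℝ) + 1) / n ≤ 1 := by
        rw [div_le_one hn0]; exact hj2
      have h2 : (0:ℝ) < ((i : ℝ) + 1) / m := by positivity
      linarith
  -- entrywise Lipschitz bound on columns
  have hcolLip : ∀ (i : Fin m) (j k : Fin n),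
      |heatMatrix T m n i j - heatMatrix T m n i k| ≤ L * gridDist n j k := by
    intro i j k
    have := heatKernel_lip T hT (harg i j) (harg i k)
    have hdist : |(((j : ℝ) + 1) / n - ((i : ℝ) + 1) / m) -
        ((((k : ℝ) + 1) / n - ((i : ℝ) + 1) / m))| = gridDist n j k := by
      unfold gridDist
      rw [show (((j : ℝ) + 1) / n - ((i : ℝ) + 1) / m) -
        ((((k : ℝ) + 1) / n - ((i : ℝ) + 1) / m)) = ((j : ℝ) - (k : ℝ)) / n by
          field_simp; ring]
      rw [abs_div, abs_of_pos hn0]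
    show |heatKernel T (((j : ℝ) + 1) / n - ((i : ℝ) + 1) / m)
      - heatKernel T (((k : ℝ) + 1) / n - ((i : ℝ) + 1) / m)| ≤ L * gridDist n j k
    rw [hL, ← hdist]; exact this
  set S : Set ℝ := {c : ℝ | ∃ F : Fin n → Fin n → ℝ,
    (∀ i j, 0 ≤ F i j) ∧ (∀ i, ∑ j, F i j ≤ f₀ i) ∧ (∀ j, ∑ i, F i j ≤ f₀' j) ∧
    (∑ i, ∑ j, F i j = 1) ∧ c = ∑ i, ∑ j, F i j * gridDist n i j} with hS
  set l2 : ℝ := l2norm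
    (fun i => (heatMatrix T m n).mulVec f₀ i - (heatMatrix T m n).mulVec f₀' i) with hl2
  -- nonemptiness of the flow set
  have hSne : S.Nonempty := by
    refine ⟨∑ i, ∑ j, (f₀ i * f₀' j) * gridDist n i j, fun i k => f₀ i * f₀' k,
      fun i k => mul_nonneg (hf₀ i).1 (hf₀' k).1, ?_, ?_, ?_, rfl⟩
    · intro i; rw [← Finset.mul_sum, hsum₀', mul_one]
    · intro k
      rw [show ∑ i, f₀ i * f₀' k = (∑ i, f₀ i) * f₀' k by rw [Finset.sum_mul], hsum₀, one_mul]
    · simp_rw [← Finset.mul_sum, hsum₀', mul_one, hsum₀]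
  -- every flow cost bounds the l2 norm
  have hkey : ∀ c' ∈ S, l2 ≤ (Real.sqrt m * L) * c' := by
    rintro c' ⟨F, hFnn, hFrow, hFcol, hFtot, rfl⟩
    -- row and column marginals are exact
    have hrow : ∀ j, ∑ k, F j k = f₀ j := by
      have h := (Finset.sum_eq_sum_iff_of_le (fun j _ => hFrow j)).1
        (by rw [hFtot, hsum₀])
      intro j; exact h j (Finset.mem_univ j)
    have hcol : ∀ k, ∑ j, F j k = f₀' k := by
      have htot' : ∑ k, ∑ j, F j k = 1 := by rw [Finset.sum_comm]; exact hFtot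
      have h := (Finset.sum_eq_sum_iff_of_le (fun k _ => hFcol k)).1
        (by rw [htot', hsum₀'])
      intro k; exact h k (Finset.mem_univ k)
    set cost : ℝ := ∑ j, ∑ k, F j k * gridDist n j k with hcost
    have hcostnn : 0 ≤ cost := by
      apply Finset.sum_nonneg; intro j _; apply Finset.sum_nonneg; intro k _
      exact mul_nonneg (hFnn j k) (div_nonneg (abs_nonneg _) hn0.le)
    -- pointwise bound on each entry of the difference
    have hpt : ∀ i : Fin m,
        |(heatMatrix T m n).mulVec f₀ i - (heatMatrix T m n).mulVec f₀' i| ≤ L * cost := by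
      intro i
      have hrewrite : (heatMatrix T m n).mulVec f₀ i - (heatMatrix T m n).mulVec f₀' i
          = ∑ j, ∑ k, F j k * (heatMatrix T m n i j - heatMatrix T m n i k) := by
        simp only [Matrix.mulVec, dotProduct]
        have e1 : ∑ j, heatMatrix T m n i j * f₀ j
            = ∑ j, ∑ k, F j k * heatMatrix T m n i j := by
          refine Finset.sum_congr rfl fun j _ => ?_
          rw [← hrow j, Finset.mul_sum]
          exact Finset.sum_congr rfl fun k _ => by ring
        have e2 : ∑ k, heatMatrix T m n i k * f₀' k
            = ∑ j, ∑ k, F j k * heatMatrix T m n i k := by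
          rw [Finset.sum_comm]
          refine Finset.sum_congr rfl fun k _ => ?_
          rw [← hcol k, Finset.mul_sum]
          exact Finset.sum_congr rfl fun j _ => by ring
        rw [e1, e2, ← Finset.sum_sub_distrib]
        refine Finset.sum_congr rfl fun j _ => ?_
        rw [← Finset.sum_sub_distrib]
        exact Finset.sum_congr rfl fun k _ => by ring
      rw [hrewrite]
      calc |∑ j, ∑ k, F j k * (heatMatrix T m n i j - heatMatrix T m n i k)|
          ≤ ∑ j, ∑ k, |F j k * (heatMatrix T m n i j - heatMatrix T m n i k)| := by
            apply (Finset.abs_sum_le_sum_abs _ _).trans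
            exact Finset.sum_le_sum fun j _ => Finset.abs_sum_le_sum_abs _ _
        _ ≤ ∑ j, ∑ k, F j k * (L * gridDist n j k) := by
            refine Finset.sum_le_sum fun j _ => Finset.sum_le_sum fun k _ => ?_
            rw [abs_mul, abs_of_nonneg (hFnn j k)]
            exact mul_le_mul_of_nonneg_left (hcolLip i j k) (hFnn j k)
        _ = L * cost := by
            rw [hcost, Finset.mul_sum]
            refine Finset.sum_congr rfl fun j _ => ?_
            rw [Finset.mul_sum]
            exact Finset.sum_congr rfl fun k _ => by ring
    -- combine over coordinates
    have hBnn : 0 ≤ L * cost := mul_nonneg hLpos.le hcostnn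
    have : l2 ≤ Real.sqrt m * (L * cost) := by
      rw [hl2]; unfold l2norm
      have hsq : ∀ i : Fin m,
          ((heatMatrix T m n).mulVec f₀ i - (heatMatrix T m n).mulVec f₀' i) ^ 2
            ≤ (L * cost) ^ 2 := by
        intro i
        have := hpt i
        nlinarith [abs_nonneg ((heatMatrix T m n).mulVec f₀ i - (heatMatrix T m n).mulVec f₀' i),
          sq_abs ((heatMatrix T m n).mulVec f₀ i - (heatMatrix T m n).mulVec f₀' i)]
      calc Real.sqrt (∑ i, ((heatMatrix T m n).mulVec f₀ i - (heatMatrix T m n).mulVec f₀' i) ^ 2)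
          ≤ Real.sqrt (∑ _i : Fin m, (L * cost) ^ 2) :=
            Real.sqrt_le_sqrt (Finset.sum_le_sum fun i _ => hsq i)
        _ = Real.sqrt ((m : ℝ) * (L * cost) ^ 2) := by
            rw [Finset.sum_const, Finset.card_univ, Fintype.card_fin, nsmul_eq_mul]
        _ = Real.sqrt m * (L * cost) := by
            rw [Real.sqrt_mul (Nat.cast_nonneg m), Real.sqrt_sq hBnn]
      done
    linarith [this, (by ring : Real.sqrt m * (L * cost) = (Real.sqrt m * L) * cost)]
  -- conclude via the infimum
  have hmL : 0 < Real.sqrt m * L := mul_pos (Real.sqrt_pos.mpr hm0) hLpos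
  have hInf : l2 / (Real.sqrt m * L) ≤ sInf S :=
    le_csInf hSne fun c' hc' => (div_le_iff₀ hmL).mpr (by rw [mul_comm]; exact hkey c' hc')
  have hfinal : l2 ≤ (Real.sqrt m * L) * sInf S := by
    have := (div_le_iff₀ hmL).mp hInf
    linarith [this, (by ring : sInf S * (Real.sqrt m * L) = (Real.sqrt m * L) * sInf S)]
  have hEMD : EMD (gridDist n) f₀ f₀' = sInf S := by rw [EMD, hS]
  rw [hEMD]
  -- identify the constants
  have hconst : (1 / (4 * Real.sqrt Real.pi)) * (Real.sqrt m / T ^ ((3 : ℝ) / 2))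
      = Real.sqrt m * L := by
    have hT32 : T ^ ((3 : ℝ) / 2) = T * Real.sqrt T := by
      rw [show (3:ℝ)/2 = 1 + 1/2 by norm_num, Real.rpow_add hT, Real.rpow_one,
        ← Real.sqrt_eq_rpow]
    have hsqrt4 : Real.sqrt (4 * Real.pi * T) = 2 * Real.sqrt Real.pi * Real.sqrt T := by
      rw [Real.sqrt_mul (by positivity), Real.sqrt_mul (by norm_num),
        show Real.sqrt 4 = 2 by rw [show (4:ℝ) = 2^2 by norm_num, Real.sqrt_sq (by norm_num)]]
    rw [hL, hT32, hsqrt4]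
    have hsπ : 0 < Real.sqrt Real.pi := Real.sqrt_pos.mpr hπ
    have hsT : 0 < Real.sqrt T := Real.sqrt_pos.mpr hT
    rw [div_mul_div_comm, one_mul, div_mul_div_comm, one_mul, mul_one_div,
      div_eq_div_iff (by positivity) (by positivity)]
    ring
  rw [hconst]
  exact hfinal
end

section
/- Fix T > 0 and let g(x) = (1/√(4πT)) e^{−x²/(4T)}. Let a < x < b with b − a = √(T/2), and define W(z) = −g'(b − x) g(z − a) − g'(x − a) g(b − z). Then for every z ∈ [b − √(2T), a + √(2T)], −W''(z) ≥ (3 e^{−5/8} / (64 π T³)) · min{b − x, x − a}. -/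
lemma heat_aux_term (T : ℝ) (hT : 0 < T) (c E : ℝ)
    (hc2 : c ^ 2 = 1 / (4 * Real.pi * T))
    (hE : Real.exp (-5 / 8) ≤ E ^ 2) (hE0 : 0 ≤ E) (hc0 : 0 ≤ c)
    (w m G1 F G2 : ℝ) (hm : 0 ≤ m) (hmw : m ≤ w)
    (hG1 : c * E ≤ G1) (hG2 : c * E ≤ G2) (hF : 3 / 4 ≤ F) :
    3 * Real.exp (-5 / 8) / (64 * Real.pi * T ^ 3) * m ≤
      w / (2 * T) * G1 * (1 / (2 * T) * F * G2) := by
  have hπ := Real.pi_pos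
  have hw : 0 ≤ w := le_trans hm hmw
  have hce : 0 ≤ c * E := mul_nonneg hc0 hE0
  have h1 : 3 * Real.exp (-5 / 8) / (64 * Real.pi * T ^ 3) * m ≤
      w / (2 * T) * (c * E) * (1 / (2 * T) * (3 / 4) * (c * E)) := by
    have hrhs : w / (2 * T) * (c * E) * (1 / (2 * T) * (3 / 4) * (c * E)) =
        3 * E ^ 2 / (64 * Real.pi * T ^ 3) * w := by
      have h : w / (2 * T) * (c * E) * (1 / (2 * T) * (3 / 4) * (c * E)) =
          3 / (16 * T ^ 2) * c ^ 2 * E ^ 2 * w := by ring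
      rw [h, hc2, div_mul_div_comm]
      ring
    rw [hrhs]
    apply mul_le_mul _ hmw hm (by positivity)
    gcongr
  refine h1.trans ?_
  have h2 : w / (2 * T) * (c * E) ≤ w / (2 * T) * G1 :=
    mul_le_mul_of_nonneg_left hG1 (by positivity)
  have h3 : 1 / (2 * T) * (3 / 4) * (c * E) ≤ 1 / (2 * T) * F * G2 := by
    have := mul_le_mul (mul_le_mul_of_nonneg_left hF (by positivity : (0:ℝ) ≤ 1/(2*T))) hG2 hce (by positivity)
    linarith
  exact mul_le_mul h2 h3 (by positivity) (le_trans (by positivity) h2)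

set_option maxHeartbeats 1000000 in
/-- For the heat kernel `g` at diffusion time `T`, sensors
`a < x < b` with `b − a = √(T/2)`, and
`W(z) = −g'(b−x) g(z−a) − g'(x−a) g(b−z)`, one has, for every
`z ∈ [b − √(2T), a + √(2T)]`,
`−W''(z) ≥ (3 e^(−5/8) / (64 π T³)) · min{b − x, x − a}`. -/
theorem heat_witness_second_derivative_bound (T : ℝ) (hT : 0 < T)
    (g g' g'' : ℝ → ℝ)
    (hg : ∀ u, g u = (1 / Real.sqrt (4 * Real.pi * T)) * Real.exp (-u ^ 2 / (4 * T)))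
    (hg' : ∀ u, g' u = -(u / (2 * T)) * g u)
    (hg'' : ∀ u, g'' u = (1 / (2 * T)) * (u ^ 2 / (2 * T) - 1) * g u)
    (a b x : ℝ) (hx₁ : a < x) (hx₂ : x < b)
    (hab : b - a = Real.sqrt (T / 2))
    (W W'' : ℝ → ℝ)
    (hW : ∀ z, W z = -g' (b - x) * g (z - a) - g' (x - a) * g (b - z))
    (hW'' : ∀ z, W'' z = -g' (b - x) * g'' (z - a) - g' (x - a) * g'' (b - z)) :
    ∀ z ∈ Set.Icc (b - Real.sqrt (2 * T)) (a + Real.sqrt (2 * T)),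
      3 * Real.exp (-5 / 8) / (64 * Real.pi * T ^ 3) * min (b - x) (x - a) ≤
        -W'' z := by
  have hπ := Real.pi_pos
  set s := Real.sqrt (T / 2) with hs_def
  have hs2 : s ^ 2 = T / 2 := Real.sq_sqrt (by positivity)
  have hs_pos : 0 < s := Real.sqrt_pos.mpr (by positivity)
  have hsq2 : Real.sqrt (2 * T) = 2 * s := by
    rw [show (2 : ℝ) * T = (2 * s) ^ 2 by nlinarith, Real.sqrt_sq (by positivity)]
  set c : ℝ := 1 / Real.sqrt (4 * Real.pi * T) with hc_def
  have hc_pos : 0 < c := by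
    have : 0 < Real.sqrt (4 * Real.pi * T) := Real.sqrt_pos.mpr (by positivity)
    positivity
  have hc2 : c ^ 2 = 1 / (4 * Real.pi * T) := by
    rw [hc_def, div_pow, one_pow, Real.sq_sqrt (by positivity)]
  set E : ℝ := Real.exp (-(1 : ℝ) / 8) with hE_def
  have hE0 : 0 ≤ E := (Real.exp_pos _).le
  have hE : Real.exp (-5 / 8) ≤ E ^ 2 := by
    have h : E ^ 2 = Real.exp (-(1 : ℝ) / 4) := by
      rw [hE_def, sq, ← Real.exp_add]; norm_num
    rw [h]
    exact Real.exp_le_exp.mpr (by norm_num)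
  have hgpos : ∀ u, 0 ≤ g u := by
    intro u; rw [hg u]
    have : 0 < Real.sqrt (4 * Real.pi * T) := Real.sqrt_pos.mpr (by positivity)
    positivity
  have hglow : ∀ u : ℝ, u ^ 2 ≤ T / 2 → c * E ≤ g u := by
    intro u hu
    rw [hg u]
    apply mul_le_mul_of_nonneg_left _ hc_pos.le
    apply Real.exp_le_exp.mpr
    rw [div_le_div_iff₀ (by norm_num) (by positivity)]
    linarith
  intro z hz
  obtain ⟨hz1, hz2⟩ := hz
  rw [hsq2] at hz1 hz2
  -- ranges for u = z - a and v = b - z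
  have hu_lo : -s ≤ z - a := by linarith
  have hu_hi : z - a ≤ 2 * s := by linarith
  have hv_lo : -s ≤ b - z := by linarith
  have hv_hi : b - z ≤ 2 * s := by linarith
  have hbx : 0 < b - x := by linarith
  have hxa : 0 < x - a := by linarith
  have hbxs : (b - x) ^ 2 ≤ T / 2 := by
    nlinarith [mul_nonneg (by linarith : (0:ℝ) ≤ s - (b - x)) (by linarith : (0:ℝ) ≤ s + (b - x))]
  have hxas : (x - a) ^ 2 ≤ T / 2 := by
    nlinarith [mul_nonneg (by linarith : (0:ℝ) ≤ s - (x - a)) (by linarith : (0:ℝ) ≤ s + (x - a))]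
  have hWval : -W'' z =
      (b - x) / (2 * T) * g (b - x) * (1 / (2 * T) * (1 - (z - a) ^ 2 / (2 * T)) * g (z - a)) +
      (x - a) / (2 * T) * g (x - a) * (1 / (2 * T) * (1 - (b - z) ^ 2 / (2 * T)) * g (b - z)) := by
    rw [hW'' z, hg' (b - x), hg' (x - a), hg'' (z - a), hg'' (b - z)]
    ring
  rw [hWval]
  have hAnn : 0 ≤ (b - x) / (2 * T) * g (b - x) *
      (1 / (2 * T) * (1 - (z - a) ^ 2 / (2 * T)) * g (z - a)) := by
    have h1 : (z - a) ^ 2 ≤ 2 * T := by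
      nlinarith [mul_nonneg (by linarith : (0:ℝ) ≤ 2 * s - (z - a)) (by linarith : (0:ℝ) ≤ 2 * s + (z - a))]
    have h2 : 0 ≤ 1 - (z - a) ^ 2 / (2 * T) := by
      rw [sub_nonneg, div_le_one (by positivity)]; linarith
    have := hgpos (b - x); have := hgpos (z - a)
    positivity
  have hBnn : 0 ≤ (x - a) / (2 * T) * g (x - a) *
      (1 / (2 * T) * (1 - (b - z) ^ 2 / (2 * T)) * g (b - z)) := by
    have h1 : (b - z) ^ 2 ≤ 2 * T := by
      nlinarith [mul_nonneg (by linarith : (0:ℝ) ≤ 2 * s - (b - z)) (by linarith : (0:ℝ) ≤ 2 * s + (b - z))]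
    have h2 : 0 ≤ 1 - (b - z) ^ 2 / (2 * T) := by
      rw [sub_nonneg, div_le_one (by positivity)]; linarith
    have := hgpos (x - a); have := hgpos (b - z)
    positivity
  by_cases hcase : (z - a) ^ 2 ≤ T / 2
  · -- first term carries the bound
    have hkey := heat_aux_term T hT c E hc2 hE hE0 hc_pos.le
      (b - x) (min (b - x) (x - a)) (g (b - x)) (1 - (z - a) ^ 2 / (2 * T)) (g (z - a))
      (le_min hbx.le hxa.le) (min_le_left _ _)
      (hglow _ hbxs) (hglow _ hcase)
      (by
        have h : (z - a) ^ 2 / (2 * T) ≤ 1 / 4 := by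
          rw [div_le_iff₀ (by positivity : (0:ℝ) < 2 * T)]; linarith
        linarith)
    linarith
  · -- then (b - z) ^ 2 ≤ T / 2
    push_neg at hcase
    have hvcase : (b - z) ^ 2 ≤ T / 2 := by
      have hu_pos : 0 ≤ z - a := by
        by_contra h
        push_neg at h
        nlinarith [mul_nonneg (by linarith : (0:ℝ) ≤ -(z - a)) (by linarith : (0:ℝ) ≤ (z - a) + s)]
      have huge : s ≤ z - a := by
        by_contra h
        push_neg at h
        nlinarith [mul_nonneg hu_pos (le_of_lt hs_pos)]
      have hv0 : b - z ≤ 0 := by linarith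
      nlinarith [mul_nonneg (by linarith : (0:ℝ) ≤ s - (b - z)) (by linarith : (0:ℝ) ≤ s + (b - z))]
    have hkey := heat_aux_term T hT c E hc2 hE hE0 hc_pos.le
      (x - a) (min (b - x) (x - a)) (g (x - a)) (1 - (b - z) ^ 2 / (2 * T)) (g (b - z))
      (le_min hbx.le hxa.le) (min_le_right _ _)
      (hglow _ hxas) (hglow _ hvcase)
      (by
        have h : (b - z) ^ 2 / (2 * T) ≤ 1 / 4 := by
          rw [div_le_iff₀ (by positivity : (0:ℝ) < 2 * T)]; linarith
        linarith)
    linarith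
end
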